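/- Let X be a Banach space. The following are equivalent: (i) X has property [P]; (ii) the set {(x, x*) ∈ strexp(B_X) × SE(X) : ‖x*‖ = x*(x) = 1} is dense in Π(X) = {(x, x*) ∈ S_X × S_{X*} : x*(x) = 1}; (iii) X has property [P] witnessed by the function ε ↦ ε²/2. -/

import Mathlib

open Filter Topology RCLike Bornology

/-- `f` strongly exposes the bounded set `C` at `x₀`. -/
def StronglyExposes {𝕜 X : Type} [RCLike 𝕜] [NormedAddCommGroup X] [NormedSpace 𝕜 X]
    (f : X →L[𝕜] 𝕜) (C : Set X) (x₀ : X) : Prop :=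
  x₀ ∈ C ∧ (∀ x ∈ C, re (f x) ≤ re (f x₀)) ∧
    ∀ u : ℕ → X, (∀ n, u n ∈ C) →
      Tendsto (fun n => re (f (u n))) atTop (𝓝 (re (f x₀))) →
      Tendsto u atTop (𝓝 x₀)

/-- `f` strongly exposes the closed unit ball at `x₀`. -/
def StronglyExposesBall {𝕜 X : Type} [RCLike 𝕜] [NormedAddCommGroup X] [NormedSpace 𝕜 X]
    (f : X →L[𝕜] 𝕜) (x₀ : X) : Prop :=
  ‖x₀‖ ≤ 1 ∧ re (f x₀) = ‖f‖ ∧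
    ∀ u : ℕ → X, (∀ n, ‖u n‖ ≤ 1) →
      Tendsto (fun n => re (f (u n))) atTop (𝓝 ‖f‖) →
      Tendsto u atTop (𝓝 x₀)

/-- `T` absolutely strongly exposes the closed unit ball at `x₀`. -/
def AbsStronglyExposes {𝕜 X Y : Type} [RCLike 𝕜] [NormedAddCommGroup X] [NormedSpace 𝕜 X]
    [NormedAddCommGroup Y] [NormedSpace 𝕜 Y] (T : X →L[𝕜] Y) (x₀ : X) : Prop :=
  ‖x₀‖ ≤ 1 ∧
    ∀ u : ℕ → X, (∀ n, ‖u n‖ ≤ 1) →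
      Tendsto (fun n => ‖T (u n)‖) atTop (𝓝 ‖T‖) →
      ∃ θ : ℕ → 𝕜, (∀ n, ‖θ n‖ = 1) ∧ Tendsto (fun n => θ n • u n) atTop (𝓝 x₀)

/-- `X` has property [P]: a Bishop–Phelps–Bollobás type property for strongly exposing
functionals, witnessed by some function `ε ↦ η(ε)`. -/
def PropertyP (𝕜 X : Type) [RCLike 𝕜] [NormedAddCommGroup X] [NormedSpace 𝕜 X] : Prop :=
  ∃ η : ℝ → ℝ, ∀ ε : ℝ, 0 < ε → ε < 1 → 0 < η ε ∧
    ∀ (x : X) (f : X →L[𝕜] 𝕜), ‖x‖ = 1 → ‖f‖ = 1 → re (f x) > 1 - η ε →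
      ∃ (y : X) (g : X →L[𝕜] 𝕜), (∃ y' : X, StronglyExposesBall g y') ∧
        ‖y‖ = 1 ∧ ‖g‖ = 1 ∧ g y = 1 ∧ ‖g - f‖ < ε ∧ ‖y - x‖ < ε

/-- `X` has property [P] witnessed by the specific function `ε ↦ ε²/2`. -/
def PropertyPSq (𝕜 X : Type) [RCLike 𝕜] [NormedAddCommGroup X] [NormedSpace 𝕜 X] : Prop :=
  ∀ ε : ℝ, 0 < ε → ε < 1 →
    ∀ (x : X) (f : X →L[𝕜] 𝕜), ‖x‖ = 1 → ‖f‖ = 1 → re (f x) > 1 - ε ^ 2 / 2 →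
      ∃ (y : X) (g : X →L[𝕜] 𝕜), (∃ y' : X, StronglyExposesBall g y') ∧
        ‖y‖ = 1 ∧ ‖g‖ = 1 ∧ g y = 1 ∧ ‖g - f‖ < ε ∧ ‖y - x‖ < ε

/-- The pairs of strongly exposed points and strongly exposing functionals are dense in `Π(X)`. -/
def DensePairs (𝕜 X : Type) [RCLike 𝕜] [NormedAddCommGroup X] [NormedSpace 𝕜 X] : Prop :=
  ∀ (x : X) (f : X →L[𝕜] 𝕜), ‖x‖ = 1 → ‖f‖ = 1 → f x = 1 →
    ∀ ε : ℝ, 0 < ε → ∃ (y : X) (g : X →L[𝕜] 𝕜),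
      (∃ h : X →L[𝕜] 𝕜, StronglyExposesBall h y) ∧
      (∃ y' : X, StronglyExposesBall g y') ∧
      ‖g‖ = 1 ∧ g y = 1 ∧ ‖y - x‖ < ε ∧ ‖g - f‖ < ε

/-!
(i) ⇒ (ii): a functional strongly exposing the ball at some point exposes every point where it
attains its norm, so the pair supplied by [P] is already a strongly exposed point with a strongly
exposing functional. (ii) ⇒ (iii): Bishop–Phelps–Bollobás moves `(x, f)` into `Π(X)` with room to
spare, and density spends that room. (iii) ⇒ (i) is immediate.

Bishop–Phelps–Bollobás is proved for real scalars and transferred by `StrongDual.extendRCLikeₗᵢ`.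
Ekeland's principle for `-f` on the unit ball, with slope `δ < ε / 2`, gives `y` near `x` with
`f z ≤ f y + δ‖z - y‖` on the ball. Separating the cone `{w | δ‖w‖ < f w}` from the ball translated
by `-y` gives a norm-one `G` with `G y = 1` and `|f| ≤ δ‖·‖` on `ker G`, and Phelps' lemma turns
this into `‖f - G‖ ≤ 2δ`.
-/

lemma exists_forall_le_add {α : Type*} {s : Set α} {φ : α → ℝ} (hs : s.Nonempty)
    (hbdd : BddBelow (φ '' s)) {e : ℝ} (he : 0 < e) : ∃ z ∈ s, ∀ v ∈ s, φ z ≤ φ v + e := by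
  obtain ⟨_, ⟨z, hz, rfl⟩, hlt⟩ :=
    exists_lt_of_csInf_lt (hs.image φ) (lt_add_of_pos_right (sInf (φ '' s)) he)
  exact ⟨z, hz, fun v hv => hlt.le.trans (by gcongr; exact csInf_le hbdd ⟨v, hv, rfl⟩)⟩

theorem ekeland_variational_principle {α : Type*} [MetricSpace α] [CompleteSpace α]
    {φ : α → ℝ} (hφ : LowerSemicontinuous φ) (hbdd : BddBelow (Set.range φ))
    {δ : ℝ} (hδ : 0 < δ) (x : α) :
    ∃ y, φ y + δ * dist y x ≤ φ x ∧ ∀ z, z ≠ y → φ y < φ z + δ * dist z y := by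
  set S : α → Set α := fun w => {z | φ z + δ * dist z w ≤ φ w}
  have mem_self (w : α) : w ∈ S w := by simp [S]
  have subset_of_mem {w z : α} (hz : z ∈ S w) : S z ⊆ S w := by
    intro v (hv : φ v + δ * dist v z ≤ φ z)
    have hz : φ z + δ * dist z w ≤ φ w := hz
    show φ v + δ * dist v w ≤ φ w
    nlinarith [dist_triangle v z w]
  have isClosed_S (w : α) : IsClosed (S w) :=
    (hφ.add (continuous_const.mul (continuous_id.dist continuous_const)).lowerSemicontinuous
      ).isClosed_preimage (φ w)
  have exists_almost_min (n : ℕ) (w : α) :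
      ∃ z ∈ S w, ∀ v ∈ S w, φ z ≤ φ v + (1 / 2) ^ n :=
    exists_forall_le_add ⟨w, mem_self w⟩ (hbdd.mono (Set.image_subset_range φ _)) (by positivity)
  choose next next_mem next_le using exists_almost_min
  set u : ℕ → α := fun n => Nat.rec x (fun n w => next n w) n
  set r : ℕ → ℝ := fun n => (1 / 2) ^ n / δ
  -- Cantor's intersection theorem applies to the nested sets `s n`, whose radii shrink to `0`.
  set s : ℕ → Set α := fun n => S (u (n + 1))
  have s_subset_ball (n : ℕ) : s n ⊆ Metric.closedBall (u (n + 1)) (r n) := by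
    intro v (hv : φ v + δ * dist v (u (n + 1)) ≤ φ (u (n + 1)))
    have hmin : φ (u (n + 1)) ≤ φ v + (1 / 2) ^ n :=
      next_le n (u n) v (subset_of_mem (next_mem n (u n)) hv)
    rw [Metric.mem_closedBall, le_div_iff₀ hδ]
    linarith
  have s_anti : Antitone s := antitone_nat_of_succ_le fun n => subset_of_mem (next_mem _ _)
  have r_tendsto : Tendsto (fun n => 2 * r n) atTop (𝓝 0) := by
    simpa using
      ((tendsto_pow_atTop_nhds_zero_of_lt_one (by norm_num) (by norm_num)).div_const δ).const_mul 2
  obtain ⟨y, hy⟩ : (⋂ n, s n).Nonempty := by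
    refine Metric.nonempty_iInter_of_nonempty_biInter (fun n => isClosed_S _)
      (fun n => Metric.isBounded_closedBall.subset (s_subset_ball n))
      (fun N => ⟨u (N + 1), Set.mem_iInter₂.2 fun n hn => s_anti hn (mem_self _)⟩) ?_
    refine squeeze_zero (fun n => Metric.diam_nonneg) (fun n => ?_) r_tendsto
    exact Metric.diam_le_of_subset_closedBall (by positivity) (s_subset_ball n)
  rw [Set.mem_iInter] at hy
  refine ⟨y, subset_of_mem (next_mem 0 x) (hy 0), fun z hzy => ?_⟩
  by_contra! hz
  have dist_le (n : ℕ) : dist z y ≤ 2 * r n := by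
    have hz' := s_subset_ball n (subset_of_mem (hy n) hz)
    have hy' := s_subset_ball n (hy n)
    rw [Metric.mem_closedBall] at hz' hy'
    linarith [dist_triangle_right z y (u (n + 1))]
  exact hzy (dist_le_zero.1 (ge_of_tendsto' r_tendsto dist_le))

lemma ContinuousLinearMap.one_le_norm_of_apply_eq_one {𝕜 E : Type*} [NontriviallyNormedField 𝕜]
    [SeminormedAddCommGroup E] [NormedSpace 𝕜 E] {g : StrongDual 𝕜 E} {y : E}
    (hg : ‖g‖ ≤ 1) (hgy : g y = 1) : 1 ≤ ‖y‖ :=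
  calc 1 = ‖g y‖ := by rw [hgy, norm_one]
    _ ≤ ‖g‖ * ‖y‖ := g.le_opNorm y
    _ ≤ ‖y‖ := mul_le_of_le_one_left (norm_nonneg y) hg

section Real

variable {E : Type*} [NormedAddCommGroup E] [NormedSpace ℝ E]

lemma ContinuousLinearMap.norm_eq_apply_of_isMaxOn_closedBall {ψ : StrongDual ℝ E} {y : E}
    (hy : ‖y‖ ≤ 1) (hmax : IsMaxOn ψ (Metric.closedBall 0 1) y) : ‖ψ‖ = ψ y := by
  have hle (z : E) (hz : ‖z‖ ≤ 1) : ψ z ≤ ψ y := isMaxOn_iff.1 hmax z (by simpa using hz)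
  have hψy : 0 ≤ ψ y := by simpa using hle 0 (by simp)
  refine le_antisymm (opNorm_le_of_unit_norm hψy fun z hz => ?_) ?_
  · have hneg := hle (-z) (by simp [hz])
    rw [map_neg] at hneg
    rw [Real.norm_eq_abs, abs_le]
    exact ⟨by linarith, hle z hz.le⟩
  · calc ψ y ≤ ‖ψ y‖ := Real.le_norm_self _
      _ ≤ ‖ψ‖ * ‖y‖ := ψ.le_opNorm y
      _ ≤ ‖ψ‖ := mul_le_of_le_one_right (norm_nonneg _) hy

lemma exists_norming_functional_pos_on_cone {fr : StrongDual ℝ E} {y : E} {δ : ℝ}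
    (hδ : 0 < δ) (hδfr : δ < ‖fr‖) (hy : ‖y‖ ≤ 1)
    (hsupp : ∀ z, ‖z‖ ≤ 1 → fr z ≤ fr y + δ * ‖z - y‖) :
    ∃ G : StrongDual ℝ E, ‖G‖ = 1 ∧ G y = 1 ∧ ∀ w, δ * ‖w‖ < fr w → 0 < G w := by
  set K : Set E := {w | δ * ‖w‖ < fr w}
  have K_convex : Convex ℝ K := by
    have := ((convexOn_univ_norm (E := E)).smul hδ.le).sub ((fr : E →ₗ[ℝ] ℝ).concaveOn convex_univ)
    simpa [sub_neg] using this.convex_lt 0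
  have K_open : IsOpen K := isOpen_lt (by fun_prop) fr.continuous
  have smul_mem_K {w : E} (hw : w ∈ K) {t : ℝ} (ht : 0 < t) : t • w ∈ K := by
    change δ * ‖t • w‖ < fr (t • w)
    rw [norm_smul, Real.norm_of_nonneg ht.le, map_smul, smul_eq_mul, mul_left_comm]
    exact mul_lt_mul_of_pos_left hw ht
  obtain ⟨w₀, hw₀⟩ : K.Nonempty := by
    by_contra! hK
    refine hδfr.not_ge (fr.opNorm_le_bound hδ.le fun w => ?_)
    have hle (w : E) : fr w ≤ δ * ‖w‖ := not_lt.1 fun h => hK.subset h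
    have hneg := hle (-w)
    rw [map_neg, norm_neg] at hneg
    rw [Real.norm_eq_abs, abs_le]
    exact ⟨by linarith, hle w⟩
  have disjoint : Disjoint K (Metric.closedBall (-y) 1) := by
    refine Set.disjoint_left.2 fun w (hw : δ * ‖w‖ < fr w) hwB => ?_
    rw [Metric.mem_closedBall, dist_eq_norm, sub_neg_eq_add] at hwB
    have := hsupp (w + y) hwB
    rw [map_add, add_sub_cancel_right] at this
    linarith
  obtain ⟨ψ, c, hψK, hψB⟩ :=
    geometric_hahn_banach_open K_convex K_open (convex_closedBall _ _) disjoint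
  have hc_nonpos : c ≤ 0 := by simpa using hψB 0 (by simpa using hy)
  have hψw₀ : ψ w₀ < 0 := (hψK w₀ hw₀).trans_le hc_nonpos
  have hc_nonneg : 0 ≤ c := by
    by_contra! hc
    have := hψK _ (smul_mem_K hw₀ (div_pos_of_neg_of_neg hc hψw₀))
    rw [map_smul, smul_eq_mul, div_mul_cancel₀ _ hψw₀.ne] at this
    exact this.false
  have hmax : IsMaxOn (-ψ) (Metric.closedBall 0 1) y := isMaxOn_iff.2 fun z hz => by
    have := hψB (z - y) (by simpa [dist_eq_norm] using hz)
    simp only [map_sub, neg_apply] at this ⊢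
    linarith
  have hnorm := ContinuousLinearMap.norm_eq_apply_of_isMaxOn_closedBall hy hmax
  have hr : 0 < (-ψ) y := by
    rw [← hnorm, norm_pos_iff]
    rintro h
    simp [neg_eq_zero.1 h] at hψw₀
  refine ⟨((-ψ) y)⁻¹ • -ψ, ?_, ?_, fun w hw => ?_⟩
  · rw [norm_smul, hnorm, Real.norm_of_nonneg (inv_nonneg.2 hr.le), inv_mul_cancel₀ hr.ne']
  · rw [smul_apply, smul_eq_mul, inv_mul_cancel₀ hr.ne']
  · have : ψ w < 0 := (hψK w hw).trans_le hc_nonpos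
    simp only [smul_apply, smul_eq_mul, neg_apply] at hr ⊢
    exact mul_pos (inv_pos.2 hr) (by linarith)

/-- Phelps' lemma: a norm-one functional that is small on `ker G` is close to `G` or to `-G`;
`δ < fr y` selects `G`. -/
lemma norm_sub_le_of_abs_le_on_ker {fr G : StrongDual ℝ E} {y : E} {δ : ℝ}
    (hfr : ‖fr‖ = 1) (hG : ‖G‖ = 1) (hy : ‖y‖ ≤ 1) (hGy : G y = 1) (hδ : 0 ≤ δ)
    (hδy : δ < fr y) (hker : ∀ z, G z = 0 → |fr z| ≤ δ * ‖z‖) : ‖fr - G‖ ≤ 2 * δ := by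
  set p : Submodule ℝ E := LinearMap.ker (G : E →ₗ[ℝ] ℝ)
  obtain ⟨h, hext, hh⟩ := exists_extension_norm_eq p (fr.comp p.subtypeL)
  have hh : ‖h‖ ≤ δ := hh.trans_le <| ContinuousLinearMap.opNorm_le_bound _ hδ fun z =>
    hker z (LinearMap.mem_ker.1 z.2)
  set c := fr y - h y
  have hdecomp : fr - h = c • G := by
    ext z
    have hz : z - G z • y ∈ p := by
      simp [p, LinearMap.mem_ker, hGy]
    have := hext ⟨_, hz⟩
    simp only [ContinuousLinearMap.comp_apply, Submodule.subtypeL_apply, map_sub, map_smul,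
      smul_eq_mul] at this
    simp only [sub_apply, smul_apply, smul_eq_mul, c]
    linarith
  have hhy : h y ≤ δ := (Real.le_norm_self _).trans <|
    (h.le_opNorm y).trans <| (mul_le_of_le_one_right (norm_nonneg _) hy).trans hh
  have hc : ‖fr - h‖ = c := by
    rw [hdecomp, norm_smul, hG, mul_one, Real.norm_of_nonneg (by linarith)]
  have hc1 : |c - 1| ≤ δ := by
    calc |c - 1| = |‖fr - h‖ - ‖fr‖| := by rw [hc, hfr]
      _ ≤ ‖fr - h - fr‖ := abs_norm_sub_norm_le _ _
      _ = ‖h‖ := by rw [sub_sub_cancel_left, norm_neg]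
      _ ≤ δ := hh
  calc ‖fr - G‖ = ‖h + (c - 1) • G‖ := by
        congr 1; linear_combination (norm := module) hdecomp
    _ ≤ ‖h‖ + |c - 1| * ‖G‖ := by
      rw [← Real.norm_eq_abs, ← norm_smul]; exact norm_add_le _ _
    _ ≤ 2 * δ := by rw [hG]; linarith

theorem bishop_phelps_bollobas_real [CompleteSpace E] {fr : StrongDual ℝ E} (hfr : ‖fr‖ = 1)
    {x : E} (hx : ‖x‖ ≤ 1) {ε : ℝ} (hε : 0 < ε) (hε1 : ε < 1) (hfx : 1 - ε ^ 2 / 2 < fr x) :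
    ∃ (y : E) (G : StrongDual ℝ E), ‖y‖ = 1 ∧ ‖G‖ = 1 ∧ G y = 1 ∧ ‖y - x‖ < ε ∧ ‖G - fr‖ < ε := by
  have apply_le_one (z : E) (hz : ‖z‖ ≤ 1) : fr z ≤ 1 :=
    (Real.le_norm_self _).trans <| (fr.le_opNorm z).trans (by rw [hfr, one_mul]; exact hz)
  obtain ⟨δ, hδl, hδr⟩ : ∃ δ, (1 - fr x) / ε < δ ∧ δ < ε / 2 :=
    exists_between ((div_lt_iff₀ hε).2 (by linarith))
  have hδ : 0 < δ := lt_of_le_of_lt (div_nonneg (by linarith [apply_le_one x hx]) hε.le) hδl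
  rw [div_lt_iff₀ hε] at hδl
  set B := Metric.closedBall (0 : E) 1
  have : CompleteSpace B := Metric.isClosed_closedBall.completeSpace_coe
  obtain ⟨⟨y, hyB⟩, hyx, hymin⟩ := ekeland_variational_principle (φ := fun z : B => -fr z)
    (fr.continuous.comp continuous_subtype_val).neg.lowerSemicontinuous
    ⟨-1, by rintro _ ⟨⟨z, hz⟩, rfl⟩; simpa using apply_le_one z (mem_closedBall_zero_iff.1 hz)⟩
    hδ ⟨x, mem_closedBall_zero_iff.2 hx⟩
  rw [mem_closedBall_zero_iff] at hyB
  simp only [Subtype.dist_eq, dist_eq_norm] at hyx hymin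
  have hsupp (z : E) (hz : ‖z‖ ≤ 1) : fr z ≤ fr y + δ * ‖z - y‖ := by
    rcases eq_or_ne z y with rfl | hne
    · simp
    · have := hymin ⟨z, mem_closedBall_zero_iff.2 hz⟩ (by simpa using hne)
      linarith
  obtain ⟨G, hG, hGy, hGpos⟩ :=
    exists_norming_functional_pos_on_cone hδ (by linarith) hyB hsupp
  have hker (z : E) (hz : G z = 0) : |fr z| ≤ δ * ‖z‖ := by
    have hle (w : E) (hw : G w = 0) : fr w ≤ δ * ‖w‖ := not_lt.1 fun h => (hGpos w h).ne' hw
    have hneg := hle (-z) (by rw [map_neg, hz, neg_zero])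
    rw [map_neg, norm_neg] at hneg
    exact abs_le.2 ⟨by linarith, hle z hz⟩
  have hδy : δ < fr y := by nlinarith [norm_nonneg (y - x)]
  refine ⟨y, G, le_antisymm hyB (G.one_le_norm_of_apply_eq_one hG.le hGy), hG, hGy, ?_, ?_⟩
  · nlinarith [apply_le_one y hyB]
  · rw [norm_sub_rev]
    linarith [norm_sub_le_of_abs_le_on_ker hfr hG hyB hGy hδ.le hδy hker]

end Real

theorem bishop_phelps_bollobas {𝕜 X : Type*} [RCLike 𝕜] [NormedAddCommGroup X] [NormedSpace 𝕜 X]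
    [CompleteSpace X] {f : StrongDual 𝕜 X} (hf : ‖f‖ = 1) {x : X} (hx : ‖x‖ ≤ 1) {ε : ℝ}
    (hε : 0 < ε) (hε1 : ε < 1) (hfx : 1 - ε ^ 2 / 2 < re (f x)) :
    ∃ (y : X) (g : StrongDual 𝕜 X), ‖y‖ = 1 ∧ ‖g‖ = 1 ∧ g y = 1 ∧ ‖y - x‖ < ε ∧ ‖g - f‖ < ε := by
  let : NormedSpace ℝ X := NormedSpace.restrictScalars ℝ 𝕜 X
  have : IsScalarTower ℝ 𝕜 X := RestrictScalars.isScalarTower ℝ 𝕜 X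
  set e := StrongDual.extendRCLikeₗᵢ (𝕜 := 𝕜) (F := X)
  obtain ⟨y, G, hy, hG, hGy, hyx, hGf⟩ := bishop_phelps_bollobas_real (fr := e.symm f)
    (by rw [e.symm.norm_map, hf]) hx hε hε1 (by simpa [e, StrongDual.extendRCLikeₗᵢ_symm_apply])
  have hre : re (e G y) = 1 := by simp [e, StrongDual.extendRCLikeₗᵢ_apply, hGy]
  have hnorm : ‖e G y‖ ≤ 1 :=
    ((e G).le_opNorm y).trans (by rw [e.norm_map, hG, hy, one_mul])
  refine ⟨y, e G, hy, by rw [e.norm_map, hG], ?_, hyx, ?_⟩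
  · rw [norm_le_re_iff_eq_norm.1 (hnorm.trans hre.ge), le_antisymm hnorm (hre ▸ re_le_norm _),
      ofReal_one]
  · rwa [← e.apply_symm_apply f, ← map_sub, e.norm_map]

lemma StronglyExposesBall.of_re_apply_eq_norm {𝕜 X : Type} [RCLike 𝕜] [NormedAddCommGroup X]
    [NormedSpace 𝕜 X] {g : X →L[𝕜] 𝕜} {y' y : X} (hse : StronglyExposesBall g y')
    (hy : ‖y‖ ≤ 1) (hgy : re (g y) = ‖g‖) : StronglyExposesBall g y := by
  have : Tendsto (fun _ : ℕ => y) atTop (𝓝 y') :=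
    hse.2.2 _ (fun _ => hy) (by rw [hgy]; exact tendsto_const_nhds)
  rwa [← tendsto_nhds_unique this tendsto_const_nhds]

section Properties

variable {𝕜 X : Type} [RCLike 𝕜] [NormedAddCommGroup X] [NormedSpace 𝕜 X]

theorem PropertyP.densePairs (hP : PropertyP 𝕜 X) : DensePairs 𝕜 X := by
  obtain ⟨η, hη⟩ := hP
  intro x f hx hf hfx ε hε
  set ε' := min ε (1 / 2)
  obtain ⟨hη_pos, hP⟩ := hη ε' (lt_min hε (by norm_num)) ((min_le_right _ _).trans_lt (by norm_num))
  obtain ⟨y, g, ⟨y', hy'⟩, hy, hg, hgy, hgf, hyx⟩ :=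
    hP x f hx hf (by rw [hfx, one_re]; linarith)
  have hse : StronglyExposesBall g y := hy'.of_re_apply_eq_norm hy.le (by rw [hgy, hg, one_re])
  exact ⟨y, g, ⟨g, hse⟩, ⟨y, hse⟩, hg, hgy, hyx.trans_le (min_le_left _ _),
    hgf.trans_le (min_le_left _ _)⟩

theorem PropertyPSq.propertyP (hP : PropertyPSq 𝕜 X) : PropertyP 𝕜 X :=
  ⟨fun ε => ε ^ 2 / 2, fun ε hε hε1 => ⟨by positivity, hP ε hε hε1⟩⟩

theorem DensePairs.propertyPSq [CompleteSpace X] (hD : DensePairs 𝕜 X) : PropertyPSq 𝕜 X := by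
  intro ε hε hε1 x f hx hf hfx
  obtain ⟨y, g, hy, hg, hgy, hyx, hgf⟩ := bishop_phelps_bollobas hf hx.le hε hε1 hfx
  set ρ := ε - max ‖y - x‖ ‖g - f‖
  obtain ⟨y₂, g₂, ⟨h, hh⟩, hse, hg₂, hgy₂, hy₂y, hg₂g⟩ :=
    hD y g hy hg hgy ρ (sub_pos.2 (max_lt hyx hgf))
  refine ⟨y₂, g₂, hse, le_antisymm hh.1 (g₂.one_le_norm_of_apply_eq_one hg₂.le hgy₂), hg₂, hgy₂,
    ?_, ?_⟩
  · linarith [norm_sub_le_norm_sub_add_norm_sub g₂ g f, le_max_right ‖y - x‖ ‖g - f‖]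
  · linarith [norm_sub_le_norm_sub_add_norm_sub y₂ y x, le_max_left ‖y - x‖ ‖g - f‖]

end Properties

theorem stmt11 {𝕜 X : Type} [RCLike 𝕜]
    [NormedAddCommGroup X] [NormedSpace 𝕜 X] [CompleteSpace X] :
    (PropertyP 𝕜 X ↔ DensePairs 𝕜 X) ∧ (DensePairs 𝕜 X ↔ PropertyPSq 𝕜 X) :=
  ⟨⟨PropertyP.densePairs, fun hD => hD.propertyPSq.propertyP⟩,
    ⟨DensePairs.propertyPSq, fun hP => hP.propertyP.densePairs⟩⟩
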